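/- arXiv:1604.04054 — 4 statements merged into one kernel-verified Lean document; each statement's English description precedes it below -/
import Mathlib

section
/- Let {g_λ} be a regularization function with constants D, E (i.e. sup_{t∈(0,1]}|t g_λ(t)| ≤ D and sup_{t∈(0,1]}|g_λ(t)| ≤ E/λ). Then for any s ∈ [0, 1/2] and λ ∈ (0,1], sup_{t∈(0,1]} (t+λ)^{s+1/2} |g_λ(t)| ≤ (E + D^{s+1/2} E^{1/2−s}) λ^{s−1/2}. -/
lemma real_rpow_add_le_add_rpow {a b p : ℝ} (ha : 0 ≤ a) (hb : 0 ≤ b) (hp : 0 ≤ p)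
    (hp1 : p ≤ 1) : (a + b) ^ p ≤ a ^ p + b ^ p := by
  lift a to NNReal using ha
  lift b to NNReal using hb
  have := NNReal.rpow_add_le_add_rpow a b hp hp1
  exact_mod_cast this

/-- For a regularization function with constants `D`, `E`, for any `s ∈ [0,1/2]` and
`λ ∈ (0,1]`, `sup_{t∈(0,1]} (t+λ)^{s+1/2}|g_λ(t)| ≤ (E + D^{s+1/2} E^{1/2-s}) λ^{s-1/2}`. -/
theorem regularization_H1_bound (g : ℝ → ℝ → ℝ) (D E : ℝ) (hD : 0 ≤ D) (hE : 0 ≤ E)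
    (hDbound : ∀ lam ∈ Set.Ioc (0:ℝ) 1, ∀ t ∈ Set.Ioc (0:ℝ) 1, |t * g lam t| ≤ D)
    (hEbound : ∀ lam ∈ Set.Ioc (0:ℝ) 1, ∀ t ∈ Set.Ioc (0:ℝ) 1, |g lam t| ≤ E / lam)
    (s : ℝ) (hs : s ∈ Set.Icc (0:ℝ) (1/2)) :
    ∀ lam ∈ Set.Ioc (0:ℝ) 1, ∀ t ∈ Set.Ioc (0:ℝ) 1,
      (t + lam) ^ (s + 1/2) * |g lam t| ≤
        (E + D ^ (s + 1/2) * E ^ (1/2 - s)) * lam ^ (s - 1/2) := by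
  obtain ⟨hs0, hs2⟩ := hs
  intro lam hlam t ht
  have hl0 : 0 < lam := hlam.1
  have ht0 : 0 < t := ht.1
  have hp0 : (0:ℝ) ≤ s + 1/2 := by linarith
  have hq0 : (0:ℝ) ≤ 1/2 - s := by linarith
  have hg0 : (0:ℝ) ≤ |g lam t| := abs_nonneg _
  have hDb := hDbound lam hlam t ht
  have hEb := hEbound lam hlam t ht
  -- split
  have hsplit : (t + lam) ^ (s + 1/2) ≤ t ^ (s + 1/2) + lam ^ (s + 1/2) :=
    real_rpow_add_le_add_rpow ht0.le hl0.le hp0 (by linarith)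
  have key : (t + lam) ^ (s + 1/2) * |g lam t| ≤
      (t ^ (s + 1/2) + lam ^ (s + 1/2)) * |g lam t| :=
    mul_le_mul_of_nonneg_right hsplit hg0
  refine key.trans ?_
  rw [add_mul]
  have hlsm : lam ^ (s - 1/2) = lam ^ (s + 1/2) / lam := by
    rw [eq_div_iff hl0.ne', ← Real.rpow_add_one hl0.ne',
      show s - 1/2 + 1 = s + 1/2 by ring]
  -- term 2
  have h2 : lam ^ (s + 1/2) * |g lam t| ≤ E * lam ^ (s - 1/2) := by
    have := mul_le_mul_of_nonneg_left hEb (Real.rpow_nonneg hl0.le (s + 1/2))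
    calc lam ^ (s + 1/2) * |g lam t| ≤ lam ^ (s + 1/2) * (E / lam) := this
      _ = E * lam ^ (s - 1/2) := by rw [hlsm]; ring
  -- term 1: interpolation
  have h1 : t ^ (s + 1/2) * |g lam t| ≤ D ^ (s + 1/2) * E ^ (1/2 - s) * lam ^ (s - 1/2) := by
    have hsplitg : |g lam t| = |g lam t| ^ (s + 1/2) * |g lam t| ^ (1/2 - s) := by
      rw [← Real.rpow_add' hg0 (by rw [show s + 1/2 + (1/2 - s) = (1:ℝ) by ring]; norm_num),
        show s + 1/2 + (1/2 - s) = (1:ℝ) by ring, Real.rpow_one]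
    have htg : t ^ (s + 1/2) * |g lam t| ^ (s + 1/2) = |t * g lam t| ^ (s + 1/2) := by
      rw [abs_mul, abs_of_pos ht0, Real.mul_rpow ht0.le hg0]
    have hb1 : |t * g lam t| ^ (s + 1/2) ≤ D ^ (s + 1/2) :=
      Real.rpow_le_rpow (abs_nonneg _) hDb hp0
    have hb2 : |g lam t| ^ (1/2 - s) ≤ (E / lam) ^ (1/2 - s) :=
      Real.rpow_le_rpow hg0 hEb hq0
    have hEdl : (E / lam) ^ (1/2 - s) = E ^ (1/2 - s) * lam ^ (s - 1/2) := by
      rw [Real.div_rpow hE hl0.le, div_eq_mul_inv, ← Real.rpow_neg hl0.le]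
      norm_num
    calc t ^ (s + 1/2) * |g lam t|
        = |t * g lam t| ^ (s + 1/2) * |g lam t| ^ (1/2 - s) := by
          conv_lhs => rw [hsplitg]
          rw [← mul_assoc, htg]
      _ ≤ D ^ (s + 1/2) * (E / lam) ^ (1/2 - s) := by
          apply mul_le_mul hb1 hb2 (Real.rpow_nonneg hg0 _) (Real.rpow_nonneg hD _)
      _ = D ^ (s + 1/2) * E ^ (1/2 - s) * lam ^ (s - 1/2) := by rw [hEdl, mul_assoc]
  calc t ^ (s + 1/2) * |g lam t| + lam ^ (s + 1/2) * |g lam t|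
      ≤ D ^ (s + 1/2) * E ^ (1/2 - s) * lam ^ (s - 1/2) + E * lam ^ (s - 1/2) :=
        add_le_add h1 h2
    _ = (E + D ^ (s + 1/2) * E ^ (1/2 - s)) * lam ^ (s - 1/2) := by ring
end

section
/- Let A and B be bounded self-adjoint positive operators on a Hilbert space. Then for any s ∈ [0,1], ‖A^s B^s‖ ≤ ‖AB‖^s, where ‖·‖ is the operator norm. -/
open scoped NNReal ENNReal

section aux

lemma spectralRadius_mul_comm' {𝕜 A : Type*} [NormedField 𝕜] [Ring A] [Algebra 𝕜 A] (a b : A) :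
    spectralRadius 𝕜 (a * b) = spectralRadius 𝕜 (b * a) := by
  have key : ∀ x y : A, spectralRadius 𝕜 (x * y) ≤ spectralRadius 𝕜 (y * x) := by
    intro x y
    rw [spectralRadius, spectralRadius]
    refine iSup₂_le fun k hk => ?_
    rcases eq_or_ne k 0 with rfl | hk0
    · simp
    · have hmem : k ∈ spectrum 𝕜 (y * x) := by
        have h := spectrum.nonzero_mul_comm (𝕜 := 𝕜) x y
        have hk' : k ∈ spectrum 𝕜 (x * y) \ {0} := ⟨hk, hk0⟩
        rw [h] at hk'
        exact hk'.1
      exact le_iSup₂ (f := fun k (_ : k ∈ spectrum 𝕜 (y * x)) => (‖k‖₊ : ℝ≥0∞)) k hmem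
  exact le_antisymm (key a b) (key b a)

variable {A : Type*} [CStarAlgebra A] [PartialOrder A] [StarOrderedRing A] [NormOneClass A]

lemma rpow_add_nonneg' (a : A) (ha : 0 ≤ a) {x y : ℝ} (hx : 0 ≤ x) (hy : 0 ≤ y)
    (hxy : x + y ≠ 0) : a ^ (x + y) = a ^ x * a ^ y := by
  rw [CFC.rpow_def, CFC.rpow_def, CFC.rpow_def,
    ← cfc_mul (fun z : ℝ≥0 => z ^ x) (fun z : ℝ≥0 => z ^ y) a
      (NNReal.continuous_rpow_const hx).continuousOn
      (NNReal.continuous_rpow_const hy).continuousOn]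
  exact cfc_congr fun z _ => NNReal.rpow_add' hxy z

lemma nnnorm_rpow_le_max (a : A) (ha : 0 ≤ a) {u : ℝ} (hu0 : 0 ≤ u) (hu1 : u ≤ 1) :
    ‖a ^ u‖₊ ≤ max 1 ‖a‖₊ := by
  rw [CFC.rpow_def]
  refine nnnorm_cfc_nnreal_le fun x hx => ?_
  have hxa : x ≤ ‖a‖₊ := spectrum.le_nnnorm_of_mem hx
  rcases le_total x 1 with h1 | h1
  · exact le_max_of_le_left (NNReal.rpow_le_one h1 hu0)
  · calc x ^ u ≤ x ^ (1:ℝ) := NNReal.rpow_le_rpow_of_exponent_le h1 hu1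
    _ = x := NNReal.rpow_one x
    _ ≤ max 1 ‖a‖₊ := le_max_of_le_right hxa

lemma heinz_key (a b : A) (ha : 0 ≤ a) (hb : 0 ≤ b) {p q : ℝ} (hp : 0 ≤ p) (hq : 0 ≤ q)
    (hpq : 0 < p + q) :
    ‖a ^ ((p+q)/2) * b ^ ((p+q)/2)‖₊ ^ 2 ≤ ‖a ^ p * b ^ p‖₊ * ‖a ^ q * b ^ q‖₊ := by
  set m : ℝ := (p+q)/2 with hm
  have hm0 : 0 ≤ m := by positivity
  have hmm : m + m ≠ 0 := by rw [hm]; intro h; nlinarith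
  have hsa : ∀ (c : A) (u : ℝ), star (c ^ u) = c ^ u := fun c u =>
    (CFC.rpow_nonneg (a := c) (y := u)).isSelfAdjoint.star_eq
  have h1 : ‖a ^ m * b ^ m‖₊ ^ 2 = ‖(b ^ m * a ^ m) * (a ^ m * b ^ m)‖₊ := by
    rw [sq, ← CStarRing.nnnorm_star_mul_self (x := a ^ m * b ^ m), star_mul, hsa, hsa]
  have hsa2 : IsSelfAdjoint ((b ^ m * a ^ m) * (a ^ m * b ^ m)) := by
    have := IsSelfAdjoint.star_mul_self (a ^ m * b ^ m)
    rwa [star_mul, hsa, hsa] at this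
  have h2 : (‖(b ^ m * a ^ m) * (a ^ m * b ^ m)‖₊ : ℝ≥0∞)
      = spectralRadius ℂ ((b ^ m * a ^ m) * (a ^ m * b ^ m)) :=
    (hsa2.spectralRadius_eq_nnnorm).symm
  have h3 : spectralRadius ℂ ((b ^ m * a ^ m) * (a ^ m * b ^ m))
      = spectralRadius ℂ ((a ^ q * b ^ q) * (b ^ p * a ^ p)) := by
    have e1 : a ^ m * a ^ m = a ^ (p + q) := by
      rw [← rpow_add_nonneg' a ha hm0 hm0 hmm, hm]; ring_nf
    have e2 : b ^ m * b ^ m = b ^ (p + q) := by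
      rw [← rpow_add_nonneg' b hb hm0 hm0 hmm, hm]; ring_nf
    have e3 : a ^ (p + q) = a ^ p * a ^ q := rpow_add_nonneg' a ha hp hq hpq.ne'
    have e4 : b ^ (p + q) = b ^ q * b ^ p := by
      rw [add_comm p q]; exact rpow_add_nonneg' b hb hq hp (by rw [add_comm q p]; exact hpq.ne')
    calc spectralRadius ℂ ((b ^ m * a ^ m) * (a ^ m * b ^ m))
        = spectralRadius ℂ (b ^ m * ((a ^ m * a ^ m) * b ^ m)) := by rw [mul_assoc, mul_assoc]
      _ = spectralRadius ℂ (((a ^ m * a ^ m) * b ^ m) * b ^ m) := spectralRadius_mul_comm' _ _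
      _ = spectralRadius ℂ (a ^ (p + q) * b ^ (p + q)) := by
          rw [mul_assoc, e2, e1]
      _ = spectralRadius ℂ (a ^ p * ((a ^ q * b ^ q) * b ^ p)) := by
          rw [e3, e4]; congr 1; simp only [mul_assoc]
      _ = spectralRadius ℂ (((a ^ q * b ^ q) * b ^ p) * a ^ p) := spectralRadius_mul_comm' _ _
      _ = spectralRadius ℂ ((a ^ q * b ^ q) * (b ^ p * a ^ p)) := by rw [mul_assoc]
  have h4 : spectralRadius ℂ ((a ^ q * b ^ q) * (b ^ p * a ^ p))
      ≤ ((‖a ^ q * b ^ q‖₊ * ‖b ^ p * a ^ p‖₊ : ℝ≥0) : ℝ≥0∞) := by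
    refine (spectrum.spectralRadius_le_nnnorm (𝕜 := ℂ) _).trans ?_
    exact_mod_cast ENNReal.coe_le_coe.mpr (nnnorm_mul_le _ _)
  have h5 : ‖b ^ p * a ^ p‖₊ = ‖a ^ p * b ^ p‖₊ := by
    rw [← nnnorm_star (a ^ p * b ^ p), star_mul, hsa, hsa]
  have hfin := (h2.trans h3).le.trans h4
  rw [h5] at hfin
  rw [h1]
  have hfin' : ‖b ^ m * a ^ m * (a ^ m * b ^ m)‖₊ ≤ ‖a ^ q * b ^ q‖₊ * ‖a ^ p * b ^ p‖₊ := by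
    exact_mod_cast hfin
  calc ‖b ^ m * a ^ m * (a ^ m * b ^ m)‖₊ ≤ ‖a ^ q * b ^ q‖₊ * ‖a ^ p * b ^ p‖₊ := hfin'
    _ = ‖a ^ p * b ^ p‖₊ * ‖a ^ q * b ^ q‖₊ := mul_comm _ _

end aux

noncomputable def heinzSeq (s : ℝ) : ℕ → ℝ
  | 0 => s
  | n+1 => if heinzSeq s n ≤ 1/2 then 2 * heinzSeq s n else 2 * heinzSeq s n - 1

lemma heinzSeq_mem {s : ℝ} (h0 : 0 ≤ s) (h1 : s ≤ 1) (n : ℕ) :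
    0 ≤ heinzSeq s n ∧ heinzSeq s n ≤ 1 := by
  induction n with
  | zero => exact ⟨h0, h1⟩
  | succ n ih =>
    rw [heinzSeq]
    split_ifs with h
    · constructor <;> linarith [ih.1, ih.2]
    · constructor <;> linarith [ih.1, ih.2]

lemma heinzSeq_le {s : ℝ} (n : ℕ) : heinzSeq s n ≤ 2 ^ n * s := by
  induction n with
  | zero => simp [heinzSeq]
  | succ n ih =>
    rw [heinzSeq, pow_succ]
    split_ifs with h <;> nlinarith [ih]

section main

variable {H : Type*} [NormedAddCommGroup H] [InnerProductSpace ℂ H] [CompleteSpace H]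

set_option maxHeartbeats 1600000 in
theorem heinz_inequality' (A B : H →L[ℂ] H)
    (hA0 : 0 ≤ A) (hB0 : 0 ≤ B) (s : ℝ) (hs : s ∈ Set.Icc (0:ℝ) 1) :
    ‖A ^ s * B ^ s‖ ≤ ‖A * B‖ ^ s := by
  obtain ⟨hs0, hs1⟩ := hs
  rcases subsingleton_or_nontrivial H with hH | hH
  · rw [Subsingleton.elim (A ^ s * B ^ s) 0, norm_zero]
    exact Real.rpow_nonneg (norm_nonneg _) s
  rcases eq_or_lt_of_le hs0 with rfl | hs0'
  · rw [CFC.rpow_zero A hA0, CFC.rpow_zero B hB0, Real.rpow_zero, one_mul, norm_one]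
  -- notation
  set M : ℝ := ‖A * B‖ with hM
  have hM0 : 0 ≤ M := norm_nonneg _
  set K : ℝ := max 1 ‖A‖ * max 1 ‖B‖ with hK
  have hK1 : (1:ℝ) ≤ K := by
    rw [hK]
    nlinarith [le_max_left (1:ℝ) ‖A‖, le_max_left (1:ℝ) ‖B‖]
  have hK0 : (0:ℝ) < K := lt_of_lt_of_le one_pos hK1
  -- real version of the key lemma
  have key : ∀ p q : ℝ, 0 ≤ p → 0 ≤ q → 0 < p + q →
      ‖A ^ ((p+q)/2) * B ^ ((p+q)/2)‖ ^ 2 ≤ ‖A ^ p * B ^ p‖ * ‖A ^ q * B ^ q‖ := by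
    intro p q hp hq hpq
    have := heinz_key A B hA0 hB0 hp hq hpq
    exact_mod_cast this
  -- norm bound
  have hQK : ∀ u : ℝ, 0 ≤ u → u ≤ 1 → ‖A ^ u * B ^ u‖ ≤ K := by
    intro u hu0 hu1
    calc ‖A ^ u * B ^ u‖ ≤ ‖A ^ u‖ * ‖B ^ u‖ := norm_mul_le _ _
      _ ≤ max 1 ‖A‖ * max 1 ‖B‖ := by
          have h1 : ‖A ^ u‖ ≤ max 1 ‖A‖ := by
            have := nnnorm_rpow_le_max A hA0 hu0 hu1
            exact_mod_cast this
          have h2 : ‖B ^ u‖ ≤ max 1 ‖B‖ := by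
            have := nnnorm_rpow_le_max B hB0 hu0 hu1
            exact_mod_cast this
          have hA1 : (0:ℝ) ≤ ‖A ^ u‖ := norm_nonneg _
          nlinarith [norm_nonneg (B ^ u), le_max_left (1:ℝ) ‖B‖]
      _ = K := hK.symm
  -- Q 0 = 1, Q 1 = M
  have hQ0 : ‖A ^ (0:ℝ) * B ^ (0:ℝ)‖ = 1 := by
    rw [CFC.rpow_zero A hA0, CFC.rpow_zero B hB0, one_mul, norm_one]
  have hQ1 : ‖A ^ (1:ℝ) * B ^ (1:ℝ)‖ = M := by
    rw [CFC.rpow_one A hA0, CFC.rpow_one B hB0]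
  -- main induction
  have main : ∀ n : ℕ, ‖A ^ s * B ^ s‖ ^ (2^n : ℕ)
      ≤ ‖A ^ (heinzSeq s n) * B ^ (heinzSeq s n)‖ * M ^ ((2:ℝ)^n * s - heinzSeq s n) := by
    intro n
    induction n with
    | zero => simp [heinzSeq]
    | succ n ih =>
      set v := heinzSeq s n with hv
      obtain ⟨hv0, hv1⟩ := heinzSeq_mem hs0 hs1 n
      have hc0 : (0:ℝ) ≤ (2:ℝ)^n * s - v := by
        have := heinzSeq_le (s := s) n
        push_cast at this ⊢
        linarith
      set c : ℝ := (2:ℝ)^n * s - v with hc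
      set w := heinzSeq s (n+1) with hw
      -- step inequality: Q v ^ 2 ≤ Q w * M ^ d  with  2^{n+1} s - w = 2 c + d
      have hstep : ‖A ^ v * B ^ v‖ ^ 2 * M ^ (2 * c)
          ≤ ‖A ^ w * B ^ w‖ * M ^ ((2:ℝ)^(n+1) * s - w) := by
        by_cases hhalf : v ≤ 1/2
        · have hwv : w = 2 * v := by rw [hw, heinzSeq, if_pos hhalf]
          have hexp : (2:ℝ)^(n+1) * s - w = 2 * c := by
            rw [hwv, hc]; ring
          rw [hexp]
          refine mul_le_mul_of_nonneg_right ?_ (Real.rpow_nonneg hM0 _)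
          rcases eq_or_lt_of_le hv0 with hv0' | hv0'
          · have hveq : v = 0 := hv0'.symm
            rw [hwv, hveq, mul_zero, hQ0]
            norm_num
          · have h := key (2*v) 0 (by linarith) le_rfl (by linarith)
            rw [add_zero] at h
            have h2 : (2*v)/2 = v := by ring
            rw [h2, hQ0, mul_one] at h
            rwa [hwv]
        · have hwv : w = 2 * v - 1 := by rw [hw, heinzSeq, if_neg hhalf]
          have hexp : (2:ℝ)^(n+1) * s - w = 2 * c + 1 := by
            rw [hwv, hc]; ring
          have h := key (2*v - 1) 1 (by linarith) zero_le_one (by linarith)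
          have h2 : (2*v - 1 + 1)/2 = v := by ring
          rw [h2, hQ1] at h
          rw [hexp, Real.rpow_add' hM0 (by positivity), Real.rpow_one, hwv]
          calc ‖A ^ v * B ^ v‖ ^ 2 * M ^ (2*c)
              ≤ (‖A ^ (2*v-1) * B ^ (2*v-1)‖ * M) * M ^ (2*c) :=
                mul_le_mul_of_nonneg_right h (Real.rpow_nonneg hM0 _)
            _ = ‖A ^ (2*v-1) * B ^ (2*v-1)‖ * (M ^ (2*c) * M) := by ring
      calc ‖A ^ s * B ^ s‖ ^ (2^(n+1) : ℕ)
          = (‖A ^ s * B ^ s‖ ^ (2^n : ℕ)) ^ 2 := by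
            rw [← pow_mul, pow_succ]
        _ ≤ (‖A ^ v * B ^ v‖ * M ^ c) ^ 2 := by
            refine pow_le_pow_left₀ (by positivity) ih 2
        _ = ‖A ^ v * B ^ v‖ ^ 2 * M ^ (2 * c) := by
            rw [mul_pow]
            congr 1
            rw [← Real.rpow_natCast (M ^ c) 2, ← Real.rpow_mul hM0]
            norm_num [mul_comm]
        _ ≤ ‖A ^ w * B ^ w‖ * M ^ ((2:ℝ)^(n+1) * s - w) := hstep
  -- combine with the uniform bound
  have main' : ∀ n : ℕ, ‖A ^ s * B ^ s‖ ^ (2^n : ℕ)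
      ≤ K * M ^ ((2:ℝ)^n * s - heinzSeq s n) := by
    intro n
    obtain ⟨hv0, hv1⟩ := heinzSeq_mem hs0 hs1 n
    refine (main n).trans (mul_le_mul_of_nonneg_right (hQK _ hv0 hv1) (Real.rpow_nonneg hM0 _))
  rcases eq_or_lt_of_le hM0 with hMz | hMpos
  · -- M = 0
    obtain ⟨n, hn⟩ := pow_unbounded_of_one_lt (1/s) (one_lt_two (α := ℝ))
    have hcpos : 0 < (2:ℝ)^n * s - heinzSeq s n := by
      have h1 := (heinzSeq_mem hs0 hs1 n).2
      have h2 : 1 < (2:ℝ)^n * s := by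
        have := (div_lt_iff₀ hs0').mp hn
        linarith
      linarith
    have h0 : ‖A ^ s * B ^ s‖ ^ (2^n : ℕ) ≤ 0 := by
      have := main' n
      rwa [← hMz, Real.zero_rpow hcpos.ne', mul_zero] at this
    have hQs0 : ‖A ^ s * B ^ s‖ = 0 := by
      have h1 : ‖A ^ s * B ^ s‖ ^ (2^n : ℕ) = 0 :=
        le_antisymm h0 (by positivity)
      exact pow_eq_zero_iff (by positivity) |>.mp h1
    rw [hQs0, ← hMz, Real.zero_rpow hs0'.ne']
  · -- M > 0 : take 2^n-th roots and pass to the limit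
    have hroot : ∀ n : ℕ, ‖A ^ s * B ^ s‖
        ≤ K ^ (((2:ℝ)^n)⁻¹) * M ^ (s - heinzSeq s n * ((2:ℝ)^n)⁻¹) := by
      intro n
      have h2n : (0:ℝ) < (2:ℝ)^n := by positivity
      have h := main' n
      have hr : (0:ℝ) ≤ ((2:ℝ)^n)⁻¹ := by positivity
      have h' := Real.rpow_le_rpow (by positivity) h hr
      calc ‖A ^ s * B ^ s‖
          = (‖A ^ s * B ^ s‖ ^ (2^n : ℕ)) ^ (((2:ℝ)^n)⁻¹) := by
            rw [← Real.rpow_natCast (‖A ^ s * B ^ s‖) (2^n), ← Real.rpow_mul (norm_nonneg _)]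
            push_cast
            rw [mul_inv_cancel₀ h2n.ne', Real.rpow_one]
        _ ≤ (K * M ^ ((2:ℝ)^n * s - heinzSeq s n)) ^ (((2:ℝ)^n)⁻¹) := h'
        _ = K ^ (((2:ℝ)^n)⁻¹) * M ^ (s - heinzSeq s n * ((2:ℝ)^n)⁻¹) := by
            rw [Real.mul_rpow hK0.le (Real.rpow_nonneg hM0 _),
              ← Real.rpow_mul hM0]
            congr 2
            field_simp
    have hrtend : Filter.Tendsto (fun n : ℕ => ((2:ℝ)^n)⁻¹) Filter.atTop (nhds 0) := by
      simp only [← inv_pow]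
      exact tendsto_pow_atTop_nhds_zero_of_lt_one (by norm_num) (by norm_num)
    have hutend : Filter.Tendsto (fun n : ℕ => heinzSeq s n * ((2:ℝ)^n)⁻¹)
        Filter.atTop (nhds 0) := by
      refine squeeze_zero (fun n => ?_) (fun n => ?_) hrtend
      · have := (heinzSeq_mem hs0 hs1 n).1
        positivity
      · have h1 := (heinzSeq_mem hs0 hs1 n).2
        have : (0:ℝ) ≤ ((2:ℝ)^n)⁻¹ := by positivity
        nlinarith
    have hKt : Filter.Tendsto (fun n : ℕ => K ^ (((2:ℝ)^n)⁻¹)) Filter.atTop (nhds 1) := by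
      have := (Real.continuousAt_const_rpow (a := K) (b := 0) hK0.ne').tendsto.comp hrtend
      simpa [Real.rpow_zero, Function.comp_def] using this
    have hMt : Filter.Tendsto (fun n : ℕ => M ^ (s - heinzSeq s n * ((2:ℝ)^n)⁻¹))
        Filter.atTop (nhds (M ^ s)) := by
      have hexp : Filter.Tendsto (fun n : ℕ => s - heinzSeq s n * ((2:ℝ)^n)⁻¹)
          Filter.atTop (nhds s) := by
        simpa using (hutend.const_sub s)
      have := (Real.continuousAt_const_rpow (a := M) (b := s) hMpos.ne').tendsto.comp hexp
      simpa [Function.comp_def] using this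
    have hlim : Filter.Tendsto
        (fun n : ℕ => K ^ (((2:ℝ)^n)⁻¹) * M ^ (s - heinzSeq s n * ((2:ℝ)^n)⁻¹))
        Filter.atTop (nhds (M ^ s)) := by
      simpa using hKt.mul hMt
    exact ge_of_tendsto' hlim hroot

end main

/-- Heinz inequality: for bounded positive self-adjoint operators `A`, `B` on a Hilbert
space and `s ∈ [0,1]`, `‖A^s B^s‖ ≤ ‖AB‖^s`. -/
theorem heinz_inequality {H : Type*} [NormedAddCommGroup H]
    [InnerProductSpace ℂ H] [CompleteSpace H]
    (A B : H →L[ℂ] H) (hA : IsSelfAdjoint A) (hB : IsSelfAdjoint B)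
    (hA0 : 0 ≤ A) (hB0 : 0 ≤ B) (s : ℝ) (hs : s ∈ Set.Icc (0:ℝ) 1) :
    ‖A ^ s * B ^ s‖ ≤ ‖A * B‖ ^ s :=
  heinz_inequality' A B hA0 hB0 s hs
end

section
/- Let B and B_x be self-adjoint positive bounded operators on a Hilbert space and λ > 0. If ‖(B_x + λ)^{-1}(B + λ)‖ ≤ 2, then for every u ∈ [0,1], ‖B^u (B_x + λ)^{-u}‖ ≤ 2. -/
set_option maxHeartbeats 2000000

open scoped NNReal ENNReal

section Helpers

variable {H : Type*} [NormedAddCommGroup H] [InnerProductSpace ℂ H] [CompleteSpace H]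

private lemma fpc_spectralRadius_mul_comm_le (a b : H →L[ℂ] H) :
    spectralRadius ℂ (a * b) ≤ spectralRadius ℂ (b * a) := by
  rw [spectralRadius, spectralRadius]
  refine iSup₂_le fun k hk => ?_
  rcases eq_or_ne k 0 with rfl | hk0
  · simp
  · have hk' : k ∈ spectrum ℂ (b * a) := by
      have := (spectrum.unit_mem_mul_comm
        (a := a) (b := b) (r := Units.mk0 k hk0)).mp (by simpa using hk)
      simpa using this
    exact le_iSup₂ (f := fun k (_ : k ∈ spectrum ℂ (b*a)) => (‖k‖₊ : ℝ≥0∞)) k hk'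

private lemma fpc_spectralRadius_mul_comm (a b : H →L[ℂ] H) :
    spectralRadius ℂ (a * b) = spectralRadius ℂ (b * a) :=
  le_antisymm (fpc_spectralRadius_mul_comm_le a b) (fpc_spectralRadius_mul_comm_le b a)

private lemma fpc_midpoint_key [Nontrivial H] (a c : H →L[ℂ] H) (ha : 0 ≤ a) (hc : 0 ≤ c)
    (ha0 : 0 ∉ spectrum ℝ≥0 a) (hc0 : 0 ∉ spectrum ℝ≥0 c) {s α β : ℝ} (hs : s + s = α + β) :
    ‖a ^ s * c ^ s‖₊ * ‖a ^ s * c ^ s‖₊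
      ≤ ‖a ^ α * c ^ α‖₊ * ‖a ^ β * c ^ β‖₊ := by
  have hsa : ∀ (x : H →L[ℂ] H) (u : ℝ), IsSelfAdjoint (x ^ u) :=
    fun x u => IsSelfAdjoint.of_nonneg CFC.rpow_nonneg
  have hstar : star (a ^ s * c ^ s) = c ^ s * a ^ s := by
    rw [star_mul, (hsa a s).star_eq, (hsa c s).star_eq]
  have hP : star (a ^ s * c ^ s) * (a ^ s * c ^ s) = c ^ s * a ^ (s + s) * c ^ s := by
    rw [hstar, CFC.rpow_add ((spectrum.zero_notMem_iff ℝ≥0).mp ha0)]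
    simp only [mul_assoc]
  have h1 : ‖a ^ s * c ^ s‖₊ * ‖a ^ s * c ^ s‖₊ = ‖c ^ s * a ^ (s+s) * c ^ s‖₊ := by
    rw [← hP, CStarRing.nnnorm_star_mul_self]
  have hPsa : IsSelfAdjoint (c ^ s * a ^ (s+s) * c ^ s) := by
    rw [← hP]; exact IsSelfAdjoint.star_mul_self _
  have h2 : (‖c ^ s * a ^ (s+s) * c ^ s‖₊ : ℝ≥0∞)
      ≤ (‖a ^ α * c ^ α‖₊ : ℝ≥0∞) * ‖a ^ β * c ^ β‖₊ := by
    rw [← hPsa.spectralRadius_eq_nnnorm]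
    have e1 : spectralRadius ℂ (c ^ s * a ^ (s+s) * c ^ s)
        = spectralRadius ℂ (c ^ α * a ^ α * (a ^ β * c ^ β)) := by
      rw [fpc_spectralRadius_mul_comm (c ^ s * a ^ (s+s)) (c ^ s)]
      have e2 : c ^ s * (c ^ s * a ^ (s + s)) = c ^ β * (c ^ α * (a ^ α * a ^ β)) := by
        rw [← mul_assoc, ← CFC.rpow_add ((spectrum.zero_notMem_iff ℝ≥0).mp hc0), hs, CFC.rpow_add ((spectrum.zero_notMem_iff ℝ≥0).mp ha0),
          add_comm α β, CFC.rpow_add ((spectrum.zero_notMem_iff ℝ≥0).mp hc0)]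
        simp only [mul_assoc]
      have e3 : c ^ α * (a ^ α * a ^ β) * c ^ β = c ^ α * a ^ α * (a ^ β * c ^ β) := by
        simp only [mul_assoc]
      rw [e2, fpc_spectralRadius_mul_comm (c ^ β) (c ^ α * (a ^ α * a ^ β)), e3]
    rw [e1]
    calc spectralRadius ℂ (c ^ α * a ^ α * (a ^ β * c ^ β))
        ≤ ‖c ^ α * a ^ α * (a ^ β * c ^ β)‖₊ := spectrum.spectralRadius_le_nnnorm _
      _ ≤ (‖c ^ α * a ^ α‖₊ : ℝ≥0∞) * ‖a ^ β * c ^ β‖₊ := by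
          exact_mod_cast ENNReal.coe_le_coe.mpr (nnnorm_mul_le _ _)
      _ = (‖a ^ α * c ^ α‖₊ : ℝ≥0∞) * ‖a ^ β * c ^ β‖₊ := by
          congr 1
          rw [← nnnorm_star, star_mul, (hsa a α).star_eq, (hsa c α).star_eq]
  rw [h1]
  exact_mod_cast h2

private lemma fpc_nnnorm_rpow_le_max [Nontrivial H] (a : H →L[ℂ] H) (ha : 0 ≤ a) {u : ℝ}
    (hu0 : 0 ≤ u) (hu1 : u ≤ 1) : ‖a ^ u‖₊ ≤ 1 ⊔ ‖a‖₊ := by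
  rw [CFC.rpow_def]
  refine nnnorm_cfc_nnreal_le fun x hx => ?_
  have hxle : x ≤ ‖a‖₊ := spectrum.le_nnnorm_of_mem hx
  rcases le_total x 1 with h|h
  · exact le_sup_of_le_left (NNReal.rpow_le_one h hu0)
  · refine le_sup_of_le_right ?_
    calc x ^ u ≤ x ^ (1:ℝ) := NNReal.rpow_le_rpow_of_exponent_le h hu1
    _ = x := NNReal.rpow_one x
    _ ≤ ‖a‖₊ := hxle

private lemma fpc_heinz_bound [Nontrivial H] (a c : H →L[ℂ] H) (ha : 0 ≤ a) (hc : 0 ≤ c)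
    (ha0 : 0 ∉ spectrum ℝ≥0 a) (hc0 : 0 ∉ spectrum ℝ≥0 c)
    (hac : ‖a * c‖₊ ≤ 2) :
    ∀ u ∈ Set.Icc (0:ℝ) 1, ‖a ^ u * c ^ u‖₊ ≤ (2:ℝ≥0) ^ u := by
  set f : ℝ → ℝ≥0 := fun u => ‖a ^ u * c ^ u‖₊ with hf
  set g : ℝ → ℝ≥0∞ := fun u => (f u : ℝ≥0∞) * ((2:ℝ≥0∞) ^ u)⁻¹ with hg
  have h2ne0 : ∀ u : ℝ, (2:ℝ≥0∞) ^ u ≠ 0 := fun u =>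
    (ENNReal.rpow_pos (by norm_num) (by norm_num)).ne'
  have h2netop : ∀ u : ℝ, (2:ℝ≥0∞) ^ u ≠ ⊤ := fun u => by
    simp [ENNReal.rpow_eq_top_iff]
  have h2add : ∀ x y : ℝ, (2:ℝ≥0∞) ^ (x + y) = 2 ^ x * 2 ^ y := fun x y =>
    ENNReal.rpow_add x y (by norm_num) (by norm_num)
  set M : ℝ≥0∞ := ⨆ u ∈ Set.Icc (0:ℝ) 1, g u with hM
  have hgleM : ∀ u ∈ Set.Icc (0:ℝ) 1, g u ≤ M := fun u hu =>
    le_iSup₂ (f := fun u (_ : u ∈ Set.Icc (0:ℝ) 1) => g u) u hu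
  have hMtop : M ≠ ⊤ := by
    refine (iSup₂_le fun u hu => ?_).trans_lt
      (ENNReal.coe_lt_top (r := (1 ⊔ ‖a‖₊) * (1 ⊔ ‖c‖₊))) |>.ne
    have h1 : ((2:ℝ≥0∞) ^ u)⁻¹ ≤ 1 := by
      rw [ENNReal.inv_le_one]
      calc (1:ℝ≥0∞) = 2 ^ (0:ℝ) := by rw [ENNReal.rpow_zero]
      _ ≤ 2 ^ u := ENNReal.rpow_le_rpow_of_exponent_le (by norm_num) hu.1
    calc g u ≤ (f u : ℝ≥0∞) * 1 := mul_le_mul_right h1 _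
    _ = f u := mul_one _
    _ ≤ ((1 ⊔ ‖a‖₊) * (1 ⊔ ‖c‖₊) : ℝ≥0) := by
        refine ENNReal.coe_le_coe.mpr ?_
        calc f u ≤ ‖a ^ u‖₊ * ‖c ^ u‖₊ := nnnorm_mul_le _ _
        _ ≤ (1 ⊔ ‖a‖₊) * (1 ⊔ ‖c‖₊) :=
            mul_le_mul' (fpc_nnnorm_rpow_le_max a ha hu.1 hu.2)
              (fpc_nnnorm_rpow_le_max c hc hu.1 hu.2)
  have hf0 : f 0 = 1 := by
    rw [hf]; simp only [CFC.rpow_zero a ha, CFC.rpow_zero c hc, mul_one, nnnorm_one]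
  have hf1 : f 1 ≤ 2 := by
    rw [hf]; simpa only [CFC.rpow_one a ha, CFC.rpow_one c hc] using hac
  have keysq : ∀ u ∈ Set.Icc (0:ℝ) 1, g u * g u ≤ M := by
    rintro u ⟨hu0, hu1⟩
    have hinv2 : ((2:ℝ≥0∞) ^ u)⁻¹ * ((2:ℝ≥0∞) ^ u)⁻¹ = ((2:ℝ≥0∞) ^ (u+u))⁻¹ := by
      rw [h2add, ENNReal.mul_inv (.inl (h2ne0 u)) (.inr (h2ne0 u))]
    have hrearr : g u * g u = ((f u * f u : ℝ≥0) : ℝ≥0∞) * ((2:ℝ≥0∞) ^ (u+u))⁻¹ := by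
      rw [hg, ENNReal.coe_mul, ← hinv2]; ring
    rcases le_or_gt u (1/2) with h|h
    · have hkey := fpc_midpoint_key a c ha hc ha0 hc0 (s := u) (α := 2*u) (β := 0) (by ring)
      have : g u * g u ≤ g (2*u) := by
        rw [hrearr, hg]
        have : ((f u * f u : ℝ≥0) : ℝ≥0∞) ≤ (f (2*u) : ℝ≥0∞) := by
          refine ENNReal.coe_le_coe.mpr ?_
          have h' : f u * f u ≤ f (2*u) * f 0 := hkey
          rwa [hf0, mul_one] at h'
        refine (mul_le_mul_left this _).trans ?_
        rw [show u + u = 2*u by ring]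
      exact this.trans (hgleM _ ⟨by positivity, by linarith⟩)
    · have hkey := fpc_midpoint_key a c ha hc ha0 hc0 (s := u) (α := 2*u - 1) (β := 1) (by ring)
      have hsplit : ((2:ℝ≥0∞) ^ (u+u))⁻¹ = ((2:ℝ≥0∞) ^ (2*u-1))⁻¹ * (2:ℝ≥0∞)⁻¹ := by
        rw [show u + u = (2*u - 1) + 1 by ring, h2add, ENNReal.rpow_one,
          ENNReal.mul_inv (.inl (h2ne0 _)) (.inr (by norm_num))]
      have hfu : ((f u * f u : ℝ≥0) : ℝ≥0∞) ≤ (f (2*u-1) : ℝ≥0∞) * 2 := by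
        have h' : f u * f u ≤ f (2*u-1) * 2 := le_trans hkey (mul_le_mul_right hf1 _)
        rw [← ENNReal.coe_ofNat, ← ENNReal.coe_mul]
        exact ENNReal.coe_le_coe.mpr h'
      have : g u * g u ≤ g (2*u-1) := by
        rw [hrearr, hsplit, hg]
        calc (f u * f u : ℝ≥0∞) * (((2:ℝ≥0∞) ^ (2*u-1))⁻¹ * (2:ℝ≥0∞)⁻¹)
            ≤ ((f (2*u-1) : ℝ≥0∞) * 2) * (((2:ℝ≥0∞) ^ (2*u-1))⁻¹ * (2:ℝ≥0∞)⁻¹) := by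
              exact mul_le_mul_left hfu _
          _ = (f (2*u-1) : ℝ≥0∞) * ((2:ℝ≥0∞) ^ (2*u-1))⁻¹ * (2 * 2⁻¹) := by ring
          _ = (f (2*u-1) : ℝ≥0∞) * ((2:ℝ≥0∞) ^ (2*u-1))⁻¹ := by
              rw [ENNReal.mul_inv_cancel (by norm_num) (by norm_num), mul_one]
      exact this.trans (hgleM _ ⟨by linarith, by linarith⟩)
  have hMle : M ≤ M ^ (1/2 : ℝ) := by
    refine iSup₂_le fun u hu => ?_
    have h1 : (g u * g u) ^ (1/2 : ℝ) = g u := by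
      rw [← sq, ← ENNReal.rpow_natCast, ← ENNReal.rpow_mul]
      norm_num
    rw [← h1]
    exact ENNReal.rpow_le_rpow (keysq u hu) (by norm_num)
  have hM1 : M ≤ 1 := by
    by_contra hM1
    push_neg at hM1
    have : M ^ (1/2:ℝ) < M := by
      conv_rhs => rw [← ENNReal.rpow_one M]
      exact ENNReal.rpow_lt_rpow_of_exponent_lt hM1 hMtop (by norm_num)
    exact absurd (hMle.trans_lt this) (lt_irrefl M)
  rintro u hu
  have hgu : (f u : ℝ≥0∞) * ((2:ℝ≥0∞) ^ u)⁻¹ ≤ 1 := (hgleM u hu).trans hM1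
  have : (f u : ℝ≥0∞) ≤ (2:ℝ≥0∞) ^ u := by
    have h' : (f u : ℝ≥0∞) / (2:ℝ≥0∞) ^ u ≤ 1 := by rwa [div_eq_mul_inv]
    simpa using (ENNReal.div_le_iff (h2ne0 u) (h2netop u)).mp h'
  rw [show ((2:ℝ≥0∞)) = ((2:ℝ≥0) : ℝ≥0∞) by norm_num,
    ← ENNReal.coe_rpow_of_ne_zero (by norm_num)] at this
  exact_mod_cast this

end Helpers

/-- If `‖(B_x + λ)⁻¹ (B + λ)‖ ≤ 2` for positive self-adjoint operators `B`, `B_x` and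
`λ > 0`, then `‖B^u (B_x + λ)^{-u}‖ ≤ 2` for all `u ∈ [0,1]`. -/
theorem fractional_power_comparison {H : Type*} [NormedAddCommGroup H]
    [InnerProductSpace ℂ H] [CompleteSpace H]
    (B Bx : H →L[ℂ] H) (hB : IsSelfAdjoint B) (hBx : IsSelfAdjoint Bx)
    (hB0 : 0 ≤ B) (hBx0 : 0 ≤ Bx) (lam : ℝ) (hlam : 0 < lam)
    (hUnit : IsUnit (Bx + (lam : ℂ) • 1))
    (hbound : ‖Ring.inverse (Bx + (lam : ℂ) • 1) * (B + (lam : ℂ) • 1)‖ ≤ 2) :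
    ∀ u ∈ Set.Icc (0:ℝ) 1,
      ‖B ^ u * (Ring.inverse (Bx + (lam : ℂ) • 1)) ^ u‖ ≤ 2 := by
  rcases subsingleton_or_nontrivial H with hH | hH
  · have : Subsingleton (H →L[ℂ] H) :=
      ⟨fun f g => ContinuousLinearMap.ext fun x => Subsingleton.elim _ _⟩
    intro u hu
    rw [Subsingleton.elim (B ^ u * (Ring.inverse (Bx + (lam : ℂ) • 1)) ^ u) 0, norm_zero]
    norm_num
  intro u hu
  obtain ⟨hu0, hu1⟩ := hu
  set t : ℝ≥0 := lam.toNNReal with ht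
  have hsmul_cfc : ∀ x : H →L[ℂ] H, 0 ≤ x →
      x + (lam : ℂ) • 1 = cfc (fun y : ℝ≥0 => y + t) x := by
    intro x hx
    rw [cfc_add x _ _, cfc_id' ℝ≥0 x, cfc_const _ _, Algebra.algebraMap_eq_smul_one]
    congr 1
    rw [NNReal.smul_def, Real.coe_toNNReal _ hlam.le]
    norm_num
  have hsmul_unit : IsUnit ((lam : ℂ) • (1 : H →L[ℂ] H)) := by
    rw [Algebra.smul_def, mul_one]
    exact (isUnit_iff_ne_zero.mpr (by exact_mod_cast hlam.ne' : (lam:ℂ) ≠ 0)).map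
      (algebraMap ℂ (H →L[ℂ] H))
  have hsmul_nonneg : 0 ≤ (lam : ℂ) • (1 : H →L[ℂ] H) := by
    have : (lam : ℂ) • (1 : H →L[ℂ] H) = cfc (fun _ : ℝ≥0 => t) B := by
      rw [cfc_const _ _, Algebra.algebraMap_eq_smul_one, NNReal.smul_def,
        Real.coe_toNNReal _ hlam.le]
      norm_num
    rw [this]
    exact cfc_predicate _ B
  -- the two shifted operators
  set A : H →L[ℂ] H := B + (lam : ℂ) • 1 with hA
  set Y : H →L[ℂ] H := Bx + (lam : ℂ) • 1 with hY
  have hA0 : 0 ≤ A := by rw [hA, hsmul_cfc B hB0]; exact cfc_predicate _ B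
  have hY0 : 0 ≤ Y := by rw [hY, hsmul_cfc Bx hBx0]; exact cfc_predicate _ Bx
  have hAunit : IsUnit A :=
    CStarAlgebra.isUnit_of_le ((lam : ℂ) • (1 : H →L[ℂ] H)) (by rw [hA, le_add_iff_nonneg_left]; exact hB0) (hsmul_unit.isStrictlyPositive hsmul_nonneg)
  have hAspec : 0 ∉ spectrum ℝ≥0 A := spectrum.zero_notMem ℝ≥0 hAunit
  have hYspec : 0 ∉ spectrum ℝ≥0 Y := spectrum.zero_notMem ℝ≥0 hUnit
  -- the inverse C of Y
  set C : H →L[ℂ] H := Ring.inverse Y with hC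
  have hCU : C = (↑hUnit.unit⁻¹ : H →L[ℂ] H) := by
    rw [hC, ← Ring.inverse_unit hUnit.unit]
    exact congrArg Ring.inverse hUnit.unit_spec.symm
  have hC0 : 0 ≤ C := by
    rw [hCU, ← CFC.rpow_neg_one_eq_inv hUnit.unit (by rwa [hUnit.unit_spec])]
    exact CFC.rpow_nonneg
  have hCunit : IsUnit C := by rw [hCU]; exact Units.isUnit _
  have hCspec : 0 ∉ spectrum ℝ≥0 C := spectrum.zero_notMem ℝ≥0 hCunit
  have hCsa : IsSelfAdjoint C := IsSelfAdjoint.of_nonneg hC0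
  have hAsa : IsSelfAdjoint A := IsSelfAdjoint.of_nonneg hA0
  -- the norm bound on A * C
  have hAC : ‖A * C‖₊ ≤ 2 := by
    have hstar : star (C * A) = A * C := by
      rw [star_mul, hAsa.star_eq, hCsa.star_eq]
    rw [← hstar, nnnorm_star]
    have : ‖C * A‖ ≤ 2 := hbound
    rw [← NNReal.coe_le_coe]
    simpa [coe_nnnorm] using this
  -- Heinz-type bound
  have hheinz : ‖A ^ u * C ^ u‖₊ ≤ (2:ℝ≥0) ^ u :=
    fpc_heinz_bound A C hA0 hC0 hAspec hCspec hAC u ⟨hu0, hu1⟩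
  -- the first factor：B^u * (A⁻¹)^u as a single cfc of B, with norm at most one
  set D : H →L[ℂ] H := Ring.inverse A with hD
  have hDU : D = (↑hAunit.unit⁻¹ : H →L[ℂ] H) := by
    rw [hD, ← Ring.inverse_unit hAunit.unit]
    exact congrArg Ring.inverse hAunit.unit_spec.symm
  have hDu_eq : D ^ u = A ^ (-u) := by
    rw [hDU, ← CFC.rpow_neg hAunit.unit u (by rwa [hAunit.unit_spec])]
    exact congrArg (· ^ (-u)) hAunit.unit_spec
  have htpos : 0 < t := Real.toNNReal_pos.mpr hlam
  have hBspec_im : (0:ℝ≥0) ∉ (fun y : ℝ≥0 => y + t) '' spectrum ℝ≥0 B := by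
    rintro ⟨y, -, hy⟩
    exact htpos.ne' (by simpa using ((add_eq_zero).mp hy).2)
  have hcont_im : ContinuousOn (fun x : ℝ≥0 => x ^ (-u))
      ((fun y : ℝ≥0 => y + t) '' spectrum ℝ≥0 B) :=
    NNReal.continuousOn_rpow_const (.inl hBspec_im)
  have hAu_cfc : A ^ (-u) = cfc (fun x : ℝ≥0 => (x + t) ^ (-u)) B := by
    rw [CFC.rpow_def, hA, hsmul_cfc B hB0, ← cfc_comp (fun x : ℝ≥0 => x ^ (-u))
      (fun y : ℝ≥0 => y + t) B hB0 hcont_im (by fun_prop)]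
    rfl
  have hcont2 : ContinuousOn (fun x : ℝ≥0 => (x + t) ^ (-u)) (spectrum ℝ≥0 B) :=
    hcont_im.comp (by fun_prop) (Set.mapsTo_image _ _)
  have hBD : ‖B ^ u * D ^ u‖₊ ≤ 1 := by
    rw [hDu_eq, hAu_cfc, CFC.rpow_def, ← cfc_mul _ _ B
      (NNReal.continuousOn_rpow_const (.inr hu0)) hcont2]
    refine nnnorm_cfc_nnreal_le fun x hx => ?_
    have hxt : (0:ℝ≥0) < x + t := lt_of_lt_of_le htpos le_add_self
    have h1 : (0:ℝ≥0) < (x + t) ^ u := NNReal.rpow_pos hxt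
    rw [NNReal.rpow_neg]
    calc x ^ u * ((x + t) ^ u)⁻¹ ≤ (x + t) ^ u * ((x + t) ^ u)⁻¹ :=
          mul_le_mul_left (NNReal.rpow_le_rpow le_self_add hu0) _
      _ = 1 := mul_inv_cancel₀ h1.ne'
  -- decompose
  have hDA1 : D ^ u * A ^ u = 1 := by
    rw [hDu_eq]
    exact CFC.rpow_neg_mul_rpow u (hAunit.isStrictlyPositive hA0)
  have hdecomp : B ^ u * C ^ u = (B ^ u * D ^ u) * (A ^ u * C ^ u) := by
    calc B ^ u * C ^ u = B ^ u * ((D ^ u * A ^ u) * C ^ u) := by rw [hDA1, one_mul]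
      _ = (B ^ u * D ^ u) * (A ^ u * C ^ u) := by simp only [mul_assoc]
  have hfinal : ‖B ^ u * C ^ u‖₊ ≤ 2 := by
    rw [hdecomp]
    calc ‖(B ^ u * D ^ u) * (A ^ u * C ^ u)‖₊
        ≤ ‖B ^ u * D ^ u‖₊ * ‖A ^ u * C ^ u‖₊ := nnnorm_mul_le _ _
      _ ≤ 1 * (2:ℝ≥0) ^ u := mul_le_mul' hBD hheinz
      _ = (2:ℝ≥0) ^ u := one_mul _
      _ ≤ (2:ℝ≥0) ^ (1:ℝ) := NNReal.rpow_le_rpow_of_exponent_le one_le_two hu1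
      _ = 2 := NNReal.rpow_one 2
  rw [← NNReal.coe_le_coe] at hfinal
  simpa [coe_nnnorm] using hfinal
end

section
/- Let ρ₁ and ρ₂ be probability measures on X × ℝ with the same marginal ν on X, such that the conditional distribution of Y given X = x is Gaussian N(g₁(x), σ²) under ρ₁ and N(g₂(x), σ²) under ρ₂, for measurable functions g₁, g₂ ∈ L²(ν). Then the Kullback–Leibler divergence satisfies K(ρ₁, ρ₂) = (1/(2σ²)) ‖g₁ − g₂‖²_{L²(ν)}. -/
open MeasureTheory ProbabilityTheory
open scoped NNReal ENNReal Real

lemma integrable_mul_pdf0 {v : ℝ≥0} (hv : v ≠ 0) :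
    Integrable (fun y : ℝ => gaussianPDFReal 0 v y * y) := by
  have hvpos : (0:ℝ) < v := lt_of_le_of_ne v.coe_nonneg (by exact_mod_cast hv.symm)
  have hb : (0:ℝ) < (2 * (v:ℝ))⁻¹ := by positivity
  have h := (integrable_mul_exp_neg_mul_sq hb).const_mul (√(2 * π * v))⁻¹
  refine h.congr (ae_of_all _ fun y => ?_)
  simp only [gaussianPDFReal, sub_zero]
  rw [neg_div, div_eq_inv_mul, neg_mul]
  ring

lemma integral_mul_pdf0 {v : ℝ≥0} (hv : v ≠ 0) :
    ∫ y : ℝ, gaussianPDFReal 0 v y * y = 0 := by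
  have hodd : ∀ y : ℝ, gaussianPDFReal 0 v (-y) * (-y) = -(gaussianPDFReal 0 v y * y) := by
    intro y
    simp [gaussianPDFReal, neg_sq]
  have := MeasureTheory.integral_neg_eq_self (fun y : ℝ => gaussianPDFReal 0 v y * y) volume
  simp_rw [hodd, integral_neg] at this
  linarith

lemma integrable_id_gaussianReal {v : ℝ≥0} (hv : v ≠ 0) (m : ℝ) :
    Integrable (fun y : ℝ => y) (gaussianReal m v) := by
  have hmap : (gaussianReal 0 v).map (· + m) = gaussianReal m v := by
    simpa using gaussianReal_map_add_const (μ := 0) (v := v) m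
  rw [← hmap]
  rw [show (fun y : ℝ => y) = id from rfl]
  rw [integrable_map_measure aestronglyMeasurable_id (measurable_id'.add_const m).aemeasurable]
  have h0 : Integrable (fun y : ℝ => y) (gaussianReal 0 v) := by
    rw [gaussianReal_of_var_ne_zero _ hv]
    have : gaussianPDF 0 v = fun y => ((gaussianPDFReal 0 v y).toNNReal : ℝ≥0∞) := rfl
    rw [this, integrable_withDensity_iff_integrable_smul
      (measurable_gaussianPDFReal 0 v).real_toNNReal]
    refine (integrable_mul_pdf0 hv).congr (ae_of_all _ fun y => ?_)
    simp [NNReal.smul_def, Real.coe_toNNReal _ (gaussianPDFReal_nonneg 0 v y)]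
  exact (h0.add (integrable_const m)).congr (ae_of_all _ fun y => rfl)

lemma integral_id_gaussianReal {v : ℝ≥0} (hv : v ≠ 0) (m : ℝ) :
    ∫ y, y ∂(gaussianReal m v) = m := by
  have hmap : (gaussianReal 0 v).map (· + m) = gaussianReal m v := by
    simpa using gaussianReal_map_add_const (μ := 0) (v := v) m
  have h0int : Integrable (fun y : ℝ => y) (gaussianReal 0 v) := by
    have := integrable_id_gaussianReal hv 0
    exact this
  have h0 : ∫ y, y ∂(gaussianReal 0 v) = 0 := by
    rw [gaussianReal_of_var_ne_zero _ hv]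
    have : gaussianPDF 0 v = fun y => ((gaussianPDFReal 0 v y).toNNReal : ℝ≥0∞) := rfl
    rw [this, integral_withDensity_eq_integral_smul
      (measurable_gaussianPDFReal 0 v).real_toNNReal]
    have heq : ∫ y : ℝ, (gaussianPDFReal 0 v y).toNNReal • y
        = ∫ y : ℝ, gaussianPDFReal 0 v y * y := by
      refine integral_congr_ae (ae_of_all _ fun y => ?_)
      simp [NNReal.smul_def, Real.coe_toNNReal _ (gaussianPDFReal_nonneg 0 v y)]
    rw [heq]
    exact integral_mul_pdf0 hv
  rw [← hmap]
  rw [show (fun y : ℝ => y) = id from rfl]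
  rw [integral_map (measurable_id'.add_const m).aemeasurable aestronglyMeasurable_id]
  simp only [id]
  rw [integral_add h0int (integrable_const m), h0]
  simp

lemma integrable_abs_sub_gaussianReal {v : ℝ≥0} (hv : v ≠ 0) (m : ℝ) :
    Integrable (fun y : ℝ => |y - m|) (gaussianReal m v) :=
  ((integrable_id_gaussianReal hv m).sub (integrable_const m)).abs

lemma integral_abs_sub_gaussianReal {v : ℝ≥0} (hv : v ≠ 0) (m : ℝ) :
    ∫ y, |y - m| ∂(gaussianReal m v) = ∫ z, |z| ∂(gaussianReal 0 v) := by
  have hmap : (gaussianReal 0 v).map (· + m) = gaussianReal m v := by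
    simpa using gaussianReal_map_add_const (μ := 0) (v := v) m
  rw [← hmap, integral_map (measurable_id'.add_const m).aemeasurable
    (((measurable_id'.sub_const m).abs).aestronglyMeasurable)]
  simp

lemma gaussian_withDensity {v : ℝ≥0} (hv : v ≠ 0) (a b : ℝ) :
    gaussianReal a v = (gaussianReal b v).withDensity
      (fun y => gaussianPDF a v y / gaussianPDF b v y) := by
  rw [gaussianReal_of_var_ne_zero _ hv, gaussianReal_of_var_ne_zero _ hv,
    ← withDensity_mul _ (measurable_gaussianPDF b v)
      (show Measurable (fun y => gaussianPDF a v y / gaussianPDF b v y) from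
        (measurable_gaussianPDF a v).div (measurable_gaussianPDF b v))]
  congr 1
  funext y
  simp only [Pi.mul_apply]
  exact (ENNReal.mul_div_cancel' (fun h => absurd h (gaussianPDF_pos b hv y).ne')
    (fun h => absurd h ENNReal.ofReal_ne_top)).symm

lemma log_gaussianPDF_ratio {v : ℝ≥0} (hv : v ≠ 0) (a b y : ℝ) :
    Real.log (gaussianPDFReal a v y / gaussianPDFReal b v y)
      = ((a - b) * (2 * y - a - b)) / (2 * (v:ℝ)) := by
  have hvpos : (0:ℝ) < v := lt_of_le_of_ne v.coe_nonneg (by exact_mod_cast hv.symm)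
  have hc : (√(2 * π * v))⁻¹ ≠ 0 := by positivity
  rw [Real.log_div (gaussianPDFReal_pos a v y hv).ne' (gaussianPDFReal_pos b v y hv).ne']
  simp only [gaussianPDFReal]
  rw [Real.log_mul hc (Real.exp_ne_zero _), Real.log_mul hc (Real.exp_ne_zero _),
    Real.log_exp, Real.log_exp]
  field_simp
  ring

section CompProd

variable {X : Type*} [MeasurableSpace X]

lemma measurable_pdf_fun {v : ℝ≥0} {g : X → ℝ} (hg : Measurable g) :
    Measurable (fun z : X × ℝ => gaussianPDF (g z.1) v z.2) := by
  unfold gaussianPDF gaussianPDFReal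
  exact ((((measurable_snd.sub (hg.comp measurable_fst)).pow_const
    _).neg.div_const _).exp.const_mul _).ennreal_ofReal

lemma compProd_withDensity_gaussian {v : ℝ≥0} (hv : v ≠ 0)
    (ν : Measure X) [IsProbabilityMeasure ν]
    (g₁ g₂ : X → ℝ) (hg₁ : Measurable g₁) (hg₂ : Measurable g₂)
    (κ₁ κ₂ : Kernel X ℝ) [IsMarkovKernel κ₁] [IsMarkovKernel κ₂]
    (hκ₁ : ∀ x, κ₁ x = gaussianReal (g₁ x) v)
    (hκ₂ : ∀ x, κ₂ x = gaussianReal (g₂ x) v) :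
    ν.compProd κ₁ = (ν.compProd κ₂).withDensity
      (fun z => gaussianPDF (g₁ z.1) v z.2 / gaussianPDF (g₂ z.1) v z.2) := by
  have hf : Measurable (fun z : X × ℝ =>
      gaussianPDF (g₁ z.1) v z.2 / gaussianPDF (g₂ z.1) v z.2) :=
    (measurable_pdf_fun hg₁).div (measurable_pdf_fun hg₂)
  set f : X × ℝ → ℝ≥0∞ :=
    fun z => gaussianPDF (g₁ z.1) v z.2 / gaussianPDF (g₂ z.1) v z.2 with hf_def
  ext s hs
  rw [withDensity_apply _ hs, Measure.compProd_apply hs,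
    ← lintegral_indicator hs, Measure.lintegral_compProd (hf.indicator hs)]
  refine lintegral_congr fun x => ?_
  have hind : (fun y => s.indicator f (x, y))
      = (Prod.mk x ⁻¹' s).indicator (fun y => f (x, y)) := by
    funext y
    by_cases hy : (x, y) ∈ s <;> simp [Set.indicator, hy]
  rw [hind, lintegral_indicator (measurable_prodMk_left hs),
    ← withDensity_apply _ (measurable_prodMk_left hs)]
  congr 1
  rw [hκ₁ x, hκ₂ x]
  rw [show (fun y => f (x, y)) = (fun y => gaussianPDF (g₁ x) v y / gaussianPDF (g₂ x) v y)
    from rfl]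
  exact gaussian_withDensity hv (g₁ x) (g₂ x)

end CompProd

/-- KL divergence between two joint measures with the same `X`-marginal `ν` and Gaussian
conditionals `N(gᵢ(x), σ²)` equals `(1/(2σ²)) ‖g₁ - g₂‖²_{L²(ν)}`. -/
theorem kl_gaussian_conditional {X : Type*} [MeasurableSpace X]
    (ν : Measure X) [IsProbabilityMeasure ν] (σ : ℝ≥0) (hσ : 0 < σ)
    (g₁ g₂ : X → ℝ) (hg₁ : Measurable g₁) (hg₂ : Measurable g₂)
    (hsq : Integrable (fun x => (g₁ x - g₂ x) ^ 2) ν)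
    (κ₁ κ₂ : Kernel X ℝ) [IsMarkovKernel κ₁] [IsMarkovKernel κ₂]
    (hκ₁ : ∀ x, κ₁ x = gaussianReal (g₁ x) (σ ^ 2))
    (hκ₂ : ∀ x, κ₂ x = gaussianReal (g₂ x) (σ ^ 2)) :
    ∫ z, Real.log ((ν.compProd κ₁).rnDeriv (ν.compProd κ₂) z).toReal ∂(ν.compProd κ₁)
      = (1 / (2 * (σ : ℝ) ^ 2)) * ∫ x, (g₁ x - g₂ x) ^ 2 ∂ν := by
  set v : ℝ≥0 := σ ^ 2 with hv_def
  have hv : v ≠ 0 := pow_ne_zero 2 hσ.ne'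
  have hvR : (v:ℝ) = (σ:ℝ) ^ 2 := by rw [hv_def]; push_cast; ring
  have hvpos : (0:ℝ) < v := lt_of_le_of_ne v.coe_nonneg (by exact_mod_cast hv.symm)
  set d : X → ℝ := fun x => g₁ x - g₂ x with hd_def
  set φ : X × ℝ → ℝ :=
    fun z => (d z.1 * (2 * z.2 - g₁ z.1 - g₂ z.1)) / (2 * (v:ℝ)) with hφ_def
  have hd_meas : Measurable d := hg₁.sub hg₂
  have hφm : Measurable φ := by
    apply Measurable.div_const
    exact ((hd_meas.comp measurable_fst).mul
      (((measurable_const.mul measurable_snd).sub (hg₁.comp measurable_fst)).sub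
        (hg₂.comp measurable_fst)))
  set f : X × ℝ → ℝ≥0∞ :=
    fun z => gaussianPDF (g₁ z.1) v z.2 / gaussianPDF (g₂ z.1) v z.2 with hf_def
  have hf : Measurable f := (measurable_pdf_fun hg₁).div (measurable_pdf_fun hg₂)
  have hcomp := compProd_withDensity_gaussian hv ν g₁ g₂ hg₁ hg₂ κ₁ κ₂ hκ₁ hκ₂
  have hac : ν.compProd κ₁ ≪ ν.compProd κ₂ := by
    rw [hcomp]; exact withDensity_absolutelyContinuous _ _
  have hrn : (ν.compProd κ₁).rnDeriv (ν.compProd κ₂) =ᵐ[ν.compProd κ₂] f := by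
    rw [hcomp]; exact Measure.rnDeriv_withDensity _ hf
  have hrn1 : (ν.compProd κ₁).rnDeriv (ν.compProd κ₂) =ᵐ[ν.compProd κ₁] f :=
    hrn.filter_mono hac.ae_le
  have hlog : (fun z => Real.log (((ν.compProd κ₁).rnDeriv (ν.compProd κ₂) z).toReal))
      =ᵐ[ν.compProd κ₁] φ := by
    filter_upwards [hrn1] with z hz
    rw [hz]
    have h2 : (f z).toReal
        = gaussianPDFReal (g₁ z.1) v z.2 / gaussianPDFReal (g₂ z.1) v z.2 := by
      simp [hf_def, gaussianPDF, ENNReal.toReal_div,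
        ENNReal.toReal_ofReal (gaussianPDFReal_nonneg _ _ _)]
    rw [h2, log_gaussianPDF_ratio hv]
  rw [integral_congr_ae hlog]
  -- integrability of φ
  have hint_x : ∀ x, Integrable (fun y => φ (x, y)) (κ₁ x) := by
    intro x
    rw [hκ₁ x]
    have heq : (fun y => φ (x, y))
        = fun y => (d x * 2 / (2*(v:ℝ))) * y + (d x * (-(g₁ x) - g₂ x))/(2*(v:ℝ)) := by
      funext y; simp only [hφ_def]; ring
    rw [heq]
    exact ((integrable_id_gaussianReal hv (g₁ x)).const_mul _).add (integrable_const _)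
  set M : ℝ := ∫ z, |z| ∂(gaussianReal 0 v) with hM_def
  have habs_int : Integrable (fun x => |d x|) ν := by
    refine Integrable.mono' ((hsq.add (integrable_const 1)).div_const 2)
      hd_meas.abs.aestronglyMeasurable (ae_of_all _ fun x => ?_)
    rw [Real.norm_eq_abs, abs_abs]
    simp only [Pi.add_apply]
    have hdx : d x = g₁ x - g₂ x := rfl
    rw [hdx]
    nlinarith [sq_nonneg (|g₁ x - g₂ x| - 1), sq_abs (g₁ x - g₂ x)]
  have hG_int : Integrable (fun x => (2*M*|d x| + d x ^ 2) / (2*(v:ℝ))) ν :=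
    (((habs_int.const_mul (2*M)).add hsq).div_const _)
  have hint : Integrable φ (ν.compProd κ₁) := by
    rw [Measure.integrable_compProd_iff hφm.aestronglyMeasurable]
    refine ⟨ae_of_all _ hint_x, ?_⟩
    refine Integrable.mono' hG_int
      (hφm.norm.stronglyMeasurable.integral_kernel_prod_right').aestronglyMeasurable
      (ae_of_all _ fun x => ?_)
    rw [Real.norm_eq_abs, abs_of_nonneg (integral_nonneg fun y => norm_nonneg _)]
    have hb_int : Integrable
        (fun y => (|d x| * (2 * |y - g₁ x| + |d x|)) / (2*(v:ℝ))) (κ₁ x) := by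
      rw [hκ₁ x]
      have heq : (fun y => (|d x| * (2 * |y - g₁ x| + |d x|)) / (2*(v:ℝ)))
          = fun y => (|d x| * 2 / (2*(v:ℝ))) * |y - g₁ x| + (|d x| * |d x|)/(2*(v:ℝ)) := by
        funext y; ring
      rw [heq]
      exact ((integrable_abs_sub_gaussianReal hv (g₁ x)).const_mul _).add (integrable_const _)
    calc ∫ y, ‖φ (x, y)‖ ∂κ₁ x
        ≤ ∫ y, (|d x| * (2 * |y - g₁ x| + |d x|)) / (2*(v:ℝ)) ∂κ₁ x := by
          refine integral_mono (hint_x x).norm hb_int fun y => ?_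
          rw [Real.norm_eq_abs]
          have hdx : d x = g₁ x - g₂ x := rfl
          have h2 : φ (x, y) = (d x * (2*(y - g₁ x) + d x)) / (2*(v:ℝ)) := by
            simp only [hφ_def, hdx]; ring
          rw [h2, abs_div, abs_of_pos (by positivity : (0:ℝ) < 2*(v:ℝ)), abs_mul]
          gcongr
          calc |2 * (y - g₁ x) + d x| ≤ |2 * (y - g₁ x)| + |d x| := abs_add_le _ _
            _ = 2 * |y - g₁ x| + |d x| := by rw [abs_mul, abs_two]
      _ = (2*M*|d x| + d x ^ 2) / (2*(v:ℝ)) := by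
          rw [hκ₁ x]
          have heq : (fun y => (|d x| * (2 * |y - g₁ x| + |d x|)) / (2*(v:ℝ)))
              = fun y => (|d x| * 2 / (2*(v:ℝ))) * |y - g₁ x| + (|d x| * |d x|)/(2*(v:ℝ)) := by
            funext y; ring
          rw [heq, integral_add ((integrable_abs_sub_gaussianReal hv (g₁ x)).const_mul _)
            (integrable_const _), integral_const_mul,
            integral_abs_sub_gaussianReal hv (g₁ x), ← hM_def, integral_const, probReal_univ]
          rw [show d x ^ 2 = |d x| * |d x| by rw [← sq_abs]; ring]
          simp only [smul_eq_mul, one_smul, ENNReal.toReal_one, one_mul]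
          ring
  rw [Measure.integral_compProd hint]
  have hinner : ∀ x, ∫ y, φ (x, y) ∂κ₁ x = d x ^ 2 / (2*(v:ℝ)) := by
    intro x
    rw [hκ₁ x]
    have heq : (fun y => φ (x, y))
        = fun y => (d x * 2 / (2*(v:ℝ))) * y + (d x * (-(g₁ x) - g₂ x))/(2*(v:ℝ)) := by
      funext y; simp only [hφ_def]; ring
    rw [heq, integral_add ((integrable_id_gaussianReal hv (g₁ x)).const_mul _)
      (integrable_const _), integral_const_mul, integral_id_gaussianReal hv,
      integral_const, probReal_univ]
    simp only [smul_eq_mul, one_smul, hd_def]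
    field_simp
    ring
  simp_rw [hinner]
  rw [integral_div]
  rw [hvR]
  simp only [hd_def]
  ring
end
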